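/- arXiv:2603.19184 — 12 statements merged into one kernel-verified Lean document; each statement's English description precedes it below -/
import Mathlib

section
/- Assume all eight w_{ijk} are nonzero, and that F_{·1·} ≠ 0, F_{1··} ≠ 0 and H ≠ 0. Then the set S = {(x,y) ∈ ℂ² : f₀(x,y) = 0 and f₁(x,y) = 0} has exactly two elements. Moreover, S contains a point with x = 0 if and only if F_{0··} = 0, and S contains a point with y = 0 if and only if F_{·0·} = 0. -/
/-!
Write `f₀ = α₀(x) + β₀(x) y` and `f₁ = α₁(x) + β₁(x) y` with `αₖ, βₖ` affine in `x`. Since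
`w₁₁₁ β₀ - w₁₁₀ β₁ = F_{·1·}` is a nonzero constant, `β₀(x)` and `β₁(x)` never vanish together, so
over each `x` the system has at most one solution `y`, and one exactly when the resultant
`α₀ β₁ - α₁ β₀` vanishes. This resultant is a quadratic in `x` with leading coefficient `F_{1··}`,
constant term `F_{0··}` and discriminant `H`, so it has two roots and `S` has two points.
Setting `y = 0` leaves two affine equations in `x` with determinant `F_{·0·}`, and `F_{1··} ≠ 0`
keeps their `x`-coefficients `w₁₀₀, w₁₀₁` from vanishing together.
-/

section LinearSystem

variable {K : Type*} [Field K] {a b c d : K}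

lemma exists_common_root_iff (hbd : b ≠ 0 ∨ d ≠ 0) :
    (∃ y, a + b * y = 0 ∧ c + d * y = 0) ↔ a * d - b * c = 0 := by
  constructor
  · rintro ⟨y, h₁, h₂⟩
    linear_combination d * h₁ - b * h₂
  · intro h
    rcases hbd with hb | hd
    · refine ⟨-a / b, by field_simp; ring, ?_⟩
      field_simp
      linear_combination -h
    · refine ⟨-c / d, ?_, by field_simp; ring⟩
      field_simp
      linear_combination h

lemma common_root_unique (hbd : b ≠ 0 ∨ d ≠ 0) {y y' : K}
    (h : a + b * y = 0 ∧ c + d * y = 0) (h' : a + b * y' = 0 ∧ c + d * y' = 0) : y = y' := by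
  rw [← sub_eq_zero]
  rcases hbd with hb | hd
  · exact (mul_eq_zero.mp (by linear_combination h.1 - h'.1 : b * (y - y') = 0)).resolve_left hb
  · exact (mul_eq_zero.mp (by linear_combination h.2 - h'.2 : d * (y - y') = 0)).resolve_left hd

end LinearSystem

lemma ncard_setOf_quadratic_eq_zero {K : Type*} [Field K] [NeZero (2 : K)] {a b c s : K}
    (ha : a ≠ 0) (hs : discrim a b c = s * s) (hs₀ : s ≠ 0) :
    {x | a * (x * x) + b * x + c = 0}.ncard = 2 := by
  have hroots : {x | a * (x * x) + b * x + c = 0} = {(-b + s) / (2 * a), (-b - s) / (2 * a)} := by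
    ext x
    exact quadratic_eq_zero_iff ha hs x
  rw [hroots, Set.ncard_pair]
  intro h
  field_simp at h
  exact hs₀ ((mul_eq_zero.mp (by linear_combination h : (2 : K) * s = 0)).resolve_left two_ne_zero)

section BilinearSystem

variable {K : Type*} [Field K] (w000 w001 w010 w011 w100 w101 w110 w111 : K)

def bilinearZeros : Set (K × K) :=
  {p | w000 + w100 * p.1 + w010 * p.2 + w110 * p.1 * p.2 = 0 ∧
    w001 + w101 * p.1 + w011 * p.2 + w111 * p.1 * p.2 = 0}

variable {w000 w001 w010 w011 w100 w101 w110 w111}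

lemma mem_bilinearZeros_iff {x y : K} :
    (x, y) ∈ bilinearZeros w000 w001 w010 w011 w100 w101 w110 w111 ↔
      (w000 + w100 * x) + (w010 + w110 * x) * y = 0 ∧
        (w001 + w101 * x) + (w011 + w111 * x) * y = 0 := by
  simp only [bilinearZeros, Set.mem_ofPred_eq]
  ring_nf

lemma coeff_y_ne_zero (hFd1 : w010 * w111 - w110 * w011 ≠ 0) (x : K) :
    w010 + w110 * x ≠ 0 ∨ w011 + w111 * x ≠ 0 := by
  by_contra! h
  exact hFd1 (by linear_combination w111 * h.1 - w110 * h.2)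

lemma injOn_fst_bilinearZeros (hFd1 : w010 * w111 - w110 * w011 ≠ 0) :
    Set.InjOn Prod.fst (bilinearZeros w000 w001 w010 w011 w100 w101 w110 w111) := by
  rintro ⟨x, y⟩ hp ⟨x', y'⟩ hp' (rfl : x = x')
  rw [mem_bilinearZeros_iff] at hp hp'
  rw [common_root_unique (coeff_y_ne_zero hFd1 x) hp hp']

lemma fst_mem_image_bilinearZeros_iff (hFd1 : w010 * w111 - w110 * w011 ≠ 0) (x : K) :
    x ∈ Prod.fst '' bilinearZeros w000 w001 w010 w011 w100 w101 w110 w111 ↔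
      (w100 * w111 - w110 * w101) * (x * x)
        + ((w000 * w111 - w001 * w110) - (w010 * w101 - w011 * w100)) * x
        + (w000 * w011 - w010 * w001) = 0 := by
  have hfibre : x ∈ Prod.fst '' bilinearZeros w000 w001 w010 w011 w100 w101 w110 w111 ↔
      ∃ y, (x, y) ∈ bilinearZeros w000 w001 w010 w011 w100 w101 w110 w111 := by
    simp
  simp only [hfibre, mem_bilinearZeros_iff, exists_common_root_iff (coeff_y_ne_zero hFd1 x)]
  ring_nf

lemma ncard_bilinearZeros [IsAlgClosed K] [NeZero (2 : K)]
    (hFd1 : w010 * w111 - w110 * w011 ≠ 0) (hF1d : w100 * w111 - w110 * w101 ≠ 0)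
    (hH : ((w000 * w111 - w001 * w110) - (w010 * w101 - w011 * w100)) ^ 2
      - 4 * (w000 * w011 - w010 * w001) * (w100 * w111 - w110 * w101) ≠ 0) :
    (bilinearZeros w000 w001 w010 w011 w100 w101 w110 w111).ncard = 2 := by
  obtain ⟨s, hs⟩ := IsAlgClosed.exists_eq_mul_self
    (discrim (w100 * w111 - w110 * w101) ((w000 * w111 - w001 * w110) - (w010 * w101 - w011 * w100))
      (w000 * w011 - w010 * w001))
  have hs₀ : s ≠ 0 := by
    rintro rfl
    exact hH (by rw [discrim, mul_zero] at hs; linear_combination hs)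
  rw [← (injOn_fst_bilinearZeros hFd1).ncard_image,
    Set.ext (fst_mem_image_bilinearZeros_iff hFd1)]
  exact ncard_setOf_quadratic_eq_zero hF1d hs hs₀

lemma exists_mem_bilinearZeros_fst_eq_zero_iff (hFd1 : w010 * w111 - w110 * w011 ≠ 0) :
    (∃ p ∈ bilinearZeros w000 w001 w010 w011 w100 w101 w110 w111, p.1 = 0) ↔
      w000 * w011 - w010 * w001 = 0 := by
  convert fst_mem_image_bilinearZeros_iff hFd1 (0 : K) using 1
  · exact Set.mem_image .. |>.symm
  · ring_nf

lemma exists_mem_bilinearZeros_snd_eq_zero_iff (hF1d : w100 * w111 - w110 * w101 ≠ 0) :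
    (∃ p ∈ bilinearZeros w000 w001 w010 w011 w100 w101 w110 w111, p.2 = 0) ↔
      w000 * w101 - w100 * w001 = 0 := by
  have hcoeff : w100 ≠ 0 ∨ w101 ≠ 0 := by
    by_contra! h
    exact hF1d (by rw [h.1, h.2]; ring)
  rw [← exists_common_root_iff hcoeff]
  constructor
  · rintro ⟨⟨x, y⟩, hp, rfl : y = 0⟩
    exact ⟨x, by simpa [bilinearZeros] using hp⟩
  · rintro ⟨x, hx⟩
    exact ⟨(x, 0), by simpa [bilinearZeros] using hx, rfl⟩

end BilinearSystem

theorem stmt_2_general (w000 w001 w010 w011 w100 w101 w110 w111 : ℂ)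
    (hFd1 : w010 * w111 - w110 * w011 ≠ 0)
    (hF1d : w100 * w111 - w110 * w101 ≠ 0)
    (hH : ((w000 * w111 - w001 * w110) - (w010 * w101 - w011 * w100)) ^ 2
      - 4 * (w000 * w011 - w010 * w001) * (w100 * w111 - w110 * w101) ≠ 0)
    (S : Set (ℂ × ℂ))
    (hS : S = {p : ℂ × ℂ |
      w000 + w100 * p.1 + w010 * p.2 + w110 * p.1 * p.2 = 0 ∧
      w001 + w101 * p.1 + w011 * p.2 + w111 * p.1 * p.2 = 0}) :
    S.ncard = 2
    ∧ ((∃ p ∈ S, p.1 = 0) ↔ w000 * w011 - w010 * w001 = 0)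
    ∧ ((∃ p ∈ S, p.2 = 0) ↔ w000 * w101 - w100 * w001 = 0) := by
  subst hS
  exact ⟨ncard_bilinearZeros hFd1 hF1d hH, exists_mem_bilinearZeros_fst_eq_zero_iff hFd1,
    exists_mem_bilinearZeros_snd_eq_zero_iff hF1d⟩

theorem stmt_2 (w000 w001 w010 w011 w100 w101 w110 w111 : ℂ)
    (h000 : w000 ≠ 0) (h001 : w001 ≠ 0) (h010 : w010 ≠ 0) (h011 : w011 ≠ 0)
    (h100 : w100 ≠ 0) (h101 : w101 ≠ 0) (h110 : w110 ≠ 0) (h111 : w111 ≠ 0)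
    (hFd1 : w010 * w111 - w110 * w011 ≠ 0)
    (hF1d : w100 * w111 - w110 * w101 ≠ 0)
    (hH : ((w000 * w111 - w001 * w110) - (w010 * w101 - w011 * w100)) ^ 2
      - 4 * (w000 * w011 - w010 * w001) * (w100 * w111 - w110 * w101) ≠ 0)
    (S : Set (ℂ × ℂ))
    (hS : S = {p : ℂ × ℂ |
      w000 + w100 * p.1 + w010 * p.2 + w110 * p.1 * p.2 = 0 ∧
      w001 + w101 * p.1 + w011 * p.2 + w111 * p.1 * p.2 = 0}) :
    S.ncard = 2
    ∧ ((∃ p ∈ S, p.1 = 0) ↔ w000 * w011 - w010 * w001 = 0)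
    ∧ ((∃ p ∈ S, p.2 = 0) ↔ w000 * w101 - w100 * w001 = 0) :=
  stmt_2_general w000 w001 w010 w011 w100 w101 w110 w111 hFd1 hF1d hH S hS
end

section
/- Assume all eight w_{ijk} are nonzero, and that F_{·1·} ≠ 0, F_{1··} ≠ 0 and H = 0. Then the set S = {(x,y) ∈ ℂ² : f₀(x,y) = 0 and f₁(x,y) = 0} has exactly one element (x*,y*). Furthermore: if F_{0··} ≠ 0 and F_{·0·} ≠ 0, then x* ≠ 0 and y* ≠ 0; if F_{0··} = 0 then x* = 0; and if F_{·0·} = 0 then y* = 0. -/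
/-!
Eliminating `y` from `f₀ = f₁ = 0` leaves the quadratic
`F_{1··} x² + (D₁ - D₂) x + F_{0··}` in `x`, where `D₁ = w₀₀₀w₁₁₁ - w₀₀₁w₁₁₀` and
`D₂ = w₀₁₀w₁₀₁ - w₀₁₁w₁₀₀`; its discriminant is `H`. The same elimination with the
roles of `x` and `y` exchanged gives `F_{·1·} y² + (D₁ + D₂) y + F_{·0·}`, again of
discriminant `H`. Since `H = 0`, each quadratic has a single root, which vanishes exactly
when the constant term does. Conversely, the root in `x` together with the linear relation
`w₁₁₁ f₀ - w₁₁₀ f₁ = D₁ + F_{1··} x + F_{·1·} y` recovers a common zero, because the two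
eliminations form an invertible linear system in `(f₀, f₁)` of determinant `F_{·1·}`.
-/

theorem neg_div_two_mul_eq_zero_iff_of_discrim_eq_zero {K : Type*} [Field K] [NeZero (2 : K)]
    {a b c : K} (ha : a ≠ 0) (h : discrim a b c = 0) : -b / (2 * a) = 0 ↔ c = 0 := by
  rw [eq_comm, ← quadratic_eq_zero_iff_of_discrim_eq_zero ha h 0]
  simp

section CommonZeros

variable {R : Type*} [CommRing R] [NoZeroDivisors R]
  {w000 w001 w010 w011 w100 w101 w110 w111 : R}

theorem common_zero_iff_of_det_ne_zero (hdet : w010 * w111 - w110 * w011 ≠ 0) (x y : R) :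
    (w000 + w100 * x + w010 * y + w110 * x * y = 0 ∧
        w001 + w101 * x + w011 * y + w111 * x * y = 0) ↔
      ((w100 * w111 - w110 * w101) * (x * x)
          + ((w000 * w111 - w001 * w110) - (w010 * w101 - w011 * w100)) * x
          + (w000 * w011 - w010 * w001) = 0 ∧
        (w000 * w111 - w001 * w110) + (w100 * w111 - w110 * w101) * x
          + (w010 * w111 - w110 * w011) * y = 0) := by
  constructor
  · rintro ⟨hf0, hf1⟩
    exact ⟨by linear_combination (w011 + w111 * x) * hf0 - (w010 + w110 * x) * hf1,
      by linear_combination w111 * hf0 - w110 * hf1⟩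
  · rintro ⟨hQ, hL⟩
    refine ⟨(mul_eq_zero.mp ?_).resolve_left hdet, (mul_eq_zero.mp ?_).resolve_left hdet⟩
    · linear_combination -w110 * hQ + (w010 + w110 * x) * hL
    · linear_combination -w111 * hQ + (w011 + w111 * x) * hL

end CommonZeros

theorem stmt_3_general (w000 w001 w010 w011 w100 w101 w110 w111 : ℂ)
    (hFd1 : w010 * w111 - w110 * w011 ≠ 0)
    (hF1d : w100 * w111 - w110 * w101 ≠ 0)
    (hH : ((w000 * w111 - w001 * w110) - (w010 * w101 - w011 * w100)) ^ 2
      - 4 * (w000 * w011 - w010 * w001) * (w100 * w111 - w110 * w101) = 0)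
    (S : Set (ℂ × ℂ))
    (hS : S = {p : ℂ × ℂ |
      w000 + w100 * p.1 + w010 * p.2 + w110 * p.1 * p.2 = 0 ∧
      w001 + w101 * p.1 + w011 * p.2 + w111 * p.1 * p.2 = 0}) :
    ∃ xs ys : ℂ, S = {(xs, ys)}
    ∧ ((w000 * w011 - w010 * w001 ≠ 0 ∧ w000 * w101 - w100 * w001 ≠ 0) →
        (xs ≠ 0 ∧ ys ≠ 0))
    ∧ (w000 * w011 - w010 * w001 = 0 → xs = 0)
    ∧ (w000 * w101 - w100 * w001 = 0 → ys = 0) := by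
  have hdiscX : discrim (w100 * w111 - w110 * w101)
      ((w000 * w111 - w001 * w110) - (w010 * w101 - w011 * w100))
      (w000 * w011 - w010 * w001) = 0 := by
    rw [discrim]; linear_combination hH
  have hdiscY : discrim (w010 * w111 - w110 * w011)
      ((w000 * w111 - w001 * w110) + (w010 * w101 - w011 * w100))
      (w000 * w101 - w100 * w001) = 0 := by
    rw [discrim]; linear_combination hH
  have hxs_zero := neg_div_two_mul_eq_zero_iff_of_discrim_eq_zero hF1d hdiscX
  have hys_zero := neg_div_two_mul_eq_zero_iff_of_discrim_eq_zero hFd1 hdiscY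
  refine ⟨_, _, ?_, fun h => ⟨hxs_zero.not.mpr h.1, hys_zero.not.mpr h.2⟩,
    hxs_zero.mpr, hys_zero.mpr⟩
  subst hS
  ext ⟨x, y⟩
  simp only [Set.mem_ofPred_eq, Set.mem_singleton_iff, Prod.mk.injEq]
  rw [common_zero_iff_of_det_ne_zero hFd1, quadratic_eq_zero_iff_of_discrim_eq_zero hF1d hdiscX]
  refine and_congr_right fun hx => ?_
  have hF1x : 2 * (w100 * w111 - w110 * w101) * x
      = -((w000 * w111 - w001 * w110) - (w010 * w101 - w011 * w100)) := by
    rw [hx, mul_div_cancel₀ _ (mul_ne_zero two_ne_zero hF1d)]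
  rw [eq_div_iff (mul_ne_zero two_ne_zero hFd1)]
  constructor
  · intro hL; linear_combination 2 * hL - hF1x
  · intro hy; linear_combination (hy + hF1x) / 2

theorem stmt_3 (w000 w001 w010 w011 w100 w101 w110 w111 : ℂ)
    (h000 : w000 ≠ 0) (h001 : w001 ≠ 0) (h010 : w010 ≠ 0) (h011 : w011 ≠ 0)
    (h100 : w100 ≠ 0) (h101 : w101 ≠ 0) (h110 : w110 ≠ 0) (h111 : w111 ≠ 0)
    (hFd1 : w010 * w111 - w110 * w011 ≠ 0)
    (hF1d : w100 * w111 - w110 * w101 ≠ 0)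
    (hH : ((w000 * w111 - w001 * w110) - (w010 * w101 - w011 * w100)) ^ 2
      - 4 * (w000 * w011 - w010 * w001) * (w100 * w111 - w110 * w101) = 0)
    (S : Set (ℂ × ℂ))
    (hS : S = {p : ℂ × ℂ |
      w000 + w100 * p.1 + w010 * p.2 + w110 * p.1 * p.2 = 0 ∧
      w001 + w101 * p.1 + w011 * p.2 + w111 * p.1 * p.2 = 0}) :
    ∃ xs ys : ℂ, S = {(xs, ys)}
    ∧ ((w000 * w011 - w010 * w001 ≠ 0 ∧ w000 * w101 - w100 * w001 ≠ 0) →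
        (xs ≠ 0 ∧ ys ≠ 0))
    ∧ (w000 * w011 - w010 * w001 = 0 → xs = 0)
    ∧ (w000 * w101 - w100 * w001 = 0 → ys = 0) :=
  stmt_3_general w000 w001 w010 w011 w100 w101 w110 w111 hFd1 hF1d hH S hS
end

section
/- Assume all eight w_{ijk} are nonzero, and that F_{·1·} ≠ 0, F_{1··} = 0 and H ≠ 0. Then the set S = {(x,y) ∈ ℂ² : f₀(x,y) = 0 and f₁(x,y) = 0} has exactly one element (x*,y*). Furthermore: if F_{0··} ≠ 0 and F_{·0·} ≠ 0, then x* ≠ 0 and y* ≠ 0; if F_{0··} = 0 then x* = 0; and if F_{·0·} = 0 then y* = 0. -/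
/-!
Write `f_k(x, y) = a_k(x) + b_k(x) y` with `a_k = w₀₀ₖ + w₁₀ₖ x` and `b_k = w₀₁ₖ + w₁₁ₖ x`.
For fixed `x` the system `f₀ = f₁ = 0` is linear in `y`; it is solvable exactly when the
resultant `a₀ b₁ - a₁ b₀ = F₀.. + D x + F₁.. x²` vanishes, and then uniquely, because
`w₁₁₁ b₀ - w₁₁₀ b₁ = F.₁. ≠ 0` keeps `b₀, b₁` from vanishing together. With `F₁.. = 0` the
hyperdeterminant is `D²`, so the resultant is a nonzero linear function of `x` with the single
root `x* = -F₀.. / D`. Finally `y* = 0` iff `a₀, a₁` have a common root, i.e. iff `F.₀. = 0`.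
-/

variable {K : Type*} [Field K]

section CommonRoot

variable {a₀ a₁ b₀ b₁ : K}

theorem det_eq_zero_of_common_root {t : K} (h₀ : a₀ + b₀ * t = 0) (h₁ : a₁ + b₁ * t = 0) :
    a₀ * b₁ - a₁ * b₀ = 0 := by
  linear_combination b₁ * h₀ - b₀ * h₁

theorem existsUnique_common_root_of_det_eq_zero_of_ne_zero (hdet : a₀ * b₁ - a₁ * b₀ = 0)
    (hb₀ : b₀ ≠ 0) : ∃! t : K, a₀ + b₀ * t = 0 ∧ a₁ + b₁ * t = 0 := by
  refine ⟨-a₀ / b₀, ⟨by field_simp; ring, ?_⟩, fun t ⟨h₀, _⟩ => ?_⟩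
  · field_simp
    linear_combination -hdet
  · rw [eq_div_iff hb₀]
    linear_combination h₀

theorem existsUnique_common_root_of_det_eq_zero (hdet : a₀ * b₁ - a₁ * b₀ = 0)
    (hb : b₀ ≠ 0 ∨ b₁ ≠ 0) : ∃! t : K, a₀ + b₀ * t = 0 ∧ a₁ + b₁ * t = 0 := by
  rcases hb with hb₀ | hb₁
  · exact existsUnique_common_root_of_det_eq_zero_of_ne_zero hdet hb₀
  · simpa only [and_comm] using existsUnique_common_root_of_det_eq_zero_of_ne_zero
      (a₀ := a₁) (a₁ := a₀) (b₁ := b₀) (by linear_combination -hdet) hb₁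

end CommonRoot

namespace BilinearPair

variable (w000 w001 w010 w011 w100 w101 w110 w111 : K)

def zeroSet : Set (K × K) :=
  {p | w000 + w100 * p.1 + w010 * p.2 + w110 * p.1 * p.2 = 0 ∧
    w001 + w101 * p.1 + w011 * p.2 + w111 * p.1 * p.2 = 0}

def resultant (x : K) : K :=
  (w000 + w100 * x) * (w011 + w111 * x) - (w001 + w101 * x) * (w010 + w110 * x)

theorem resultant_eq (x : K) :
    resultant w000 w001 w010 w011 w100 w101 w110 w111 x =
      (w000 * w011 - w010 * w001) + (w000 * w111 - w001 * w110 - w010 * w101 + w011 * w100) * x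
        + (w100 * w111 - w110 * w101) * x ^ 2 := by
  unfold resultant
  ring

theorem mem_zeroSet_iff (x y : K) :
    (x, y) ∈ zeroSet w000 w001 w010 w011 w100 w101 w110 w111 ↔
      (w000 + w100 * x) + (w010 + w110 * x) * y = 0 ∧
        (w001 + w101 * x) + (w011 + w111 * x) * y = 0 := by
  show (_ ∧ _) ↔ _
  constructor <;> rintro ⟨h₀, h₁⟩ <;> exact ⟨by linear_combination h₀, by linear_combination h₁⟩

variable {w000 w001 w010 w011 w100 w101 w110 w111}

theorem resultant_eq_zero_of_mem {p : K × K}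
    (hp : p ∈ zeroSet w000 w001 w010 w011 w100 w101 w110 w111) :
    resultant w000 w001 w010 w011 w100 w101 w110 w111 p.1 = 0 := by
  rw [← Prod.mk.eta (p := p), mem_zeroSet_iff] at hp
  exact det_eq_zero_of_common_root hp.1 hp.2

theorem existsUnique_mem_of_resultant_eq_zero (hFd1 : w010 * w111 - w110 * w011 ≠ 0) {x : K}
    (hx : resultant w000 w001 w010 w011 w100 w101 w110 w111 x = 0) :
    ∃! y, (x, y) ∈ zeroSet w000 w001 w010 w011 w100 w101 w110 w111 := by
  have hb : w010 + w110 * x ≠ 0 ∨ w011 + w111 * x ≠ 0 := by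
    by_contra! h
    exact hFd1 (by linear_combination w111 * h.1 - w110 * h.2)
  simpa only [mem_zeroSet_iff] using existsUnique_common_root_of_det_eq_zero hx hb

theorem exists_zeroSet_eq_singleton (hFd1 : w010 * w111 - w110 * w011 ≠ 0) {x₀ : K}
    (hroot : ∀ x, resultant w000 w001 w010 w011 w100 w101 w110 w111 x = 0 ↔ x = x₀) :
    ∃ y₀, zeroSet w000 w001 w010 w011 w100 w101 w110 w111 = {(x₀, y₀)} := by
  obtain ⟨y₀, hy₀, huniq⟩ := existsUnique_mem_of_resultant_eq_zero hFd1 ((hroot x₀).2 rfl)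
  refine ⟨y₀, Set.eq_singleton_iff_unique_mem.2 ⟨hy₀, fun ⟨x, y⟩ hp => ?_⟩⟩
  obtain rfl : x = x₀ := (hroot x).1 (resultant_eq_zero_of_mem hp)
  rw [huniq y hp]

theorem exists_mem_zeroSet_snd_eq_zero_iff (h100 : w100 ≠ 0) :
    (∃ x, (x, 0) ∈ zeroSet w000 w001 w010 w011 w100 w101 w110 w111) ↔
      w000 * w101 - w100 * w001 = 0 := by
  simp only [mem_zeroSet_iff, mul_zero, add_zero]
  refine ⟨fun ⟨x, h₀, h₁⟩ => ?_, fun h => ?_⟩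
  · linear_combination det_eq_zero_of_common_root h₀ h₁
  · exact (existsUnique_common_root_of_det_eq_zero_of_ne_zero
      (by linear_combination h) h100).exists

end BilinearPair

open BilinearPair

theorem stmt_4_general (w000 w001 w010 w011 w100 w101 w110 w111 : ℂ)
    (h100 : w100 ≠ 0)
    (hFd1 : w010 * w111 - w110 * w011 ≠ 0)
    (hF1d : w100 * w111 - w110 * w101 = 0)
    (hH : ((w000 * w111 - w001 * w110) - (w010 * w101 - w011 * w100)) ^ 2
      - 4 * (w000 * w011 - w010 * w001) * (w100 * w111 - w110 * w101) ≠ 0)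
    (S : Set (ℂ × ℂ))
    (hS : S = {p : ℂ × ℂ |
      w000 + w100 * p.1 + w010 * p.2 + w110 * p.1 * p.2 = 0 ∧
      w001 + w101 * p.1 + w011 * p.2 + w111 * p.1 * p.2 = 0}) :
    ∃ xs ys : ℂ, S = {(xs, ys)}
    ∧ ((w000 * w011 - w010 * w001 ≠ 0 ∧ w000 * w101 - w100 * w001 ≠ 0) →
        (xs ≠ 0 ∧ ys ≠ 0))
    ∧ (w000 * w011 - w010 * w001 = 0 → xs = 0)
    ∧ (w000 * w101 - w100 * w001 = 0 → ys = 0) := by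
  set F₀ := w000 * w011 - w010 * w001
  set D := w000 * w111 - w001 * w110 - w010 * w101 + w011 * w100
  have hD : D ≠ 0 := fun h => hH (by linear_combination D * h - 4 * F₀ * hF1d)
  have hroot : ∀ x, resultant w000 w001 w010 w011 w100 w101 w110 w111 x = 0 ↔ x = -F₀ / D := by
    intro x
    rw [resultant_eq, hF1d, eq_div_iff hD]
    constructor <;> intro h <;> linear_combination h
  obtain ⟨ys, hys⟩ := exists_zeroSet_eq_singleton hFd1 hroot
  have hxs_eq_zero : -F₀ / D = 0 ↔ F₀ = 0 := by simp [hD]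
  have hys_eq_zero : ys = 0 ↔ w000 * w101 - w100 * w001 = 0 := by
    rw [← exists_mem_zeroSet_snd_eq_zero_iff h100, hys]
    simp [@eq_comm _ ys]
  exact ⟨-F₀ / D, ys, hS.trans hys, fun h => ⟨mt hxs_eq_zero.1 h.1, mt hys_eq_zero.1 h.2⟩,
    hxs_eq_zero.2, hys_eq_zero.2⟩

theorem stmt_4 (w000 w001 w010 w011 w100 w101 w110 w111 : ℂ)
    (h000 : w000 ≠ 0) (h001 : w001 ≠ 0) (h010 : w010 ≠ 0) (h011 : w011 ≠ 0)
    (h100 : w100 ≠ 0) (h101 : w101 ≠ 0) (h110 : w110 ≠ 0) (h111 : w111 ≠ 0)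
    (hFd1 : w010 * w111 - w110 * w011 ≠ 0)
    (hF1d : w100 * w111 - w110 * w101 = 0)
    (hH : ((w000 * w111 - w001 * w110) - (w010 * w101 - w011 * w100)) ^ 2
      - 4 * (w000 * w011 - w010 * w001) * (w100 * w111 - w110 * w101) ≠ 0)
    (S : Set (ℂ × ℂ))
    (hS : S = {p : ℂ × ℂ |
      w000 + w100 * p.1 + w010 * p.2 + w110 * p.1 * p.2 = 0 ∧
      w001 + w101 * p.1 + w011 * p.2 + w111 * p.1 * p.2 = 0}) :
    ∃ xs ys : ℂ, S = {(xs, ys)}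
    ∧ ((w000 * w011 - w010 * w001 ≠ 0 ∧ w000 * w101 - w100 * w001 ≠ 0) →
        (xs ≠ 0 ∧ ys ≠ 0))
    ∧ (w000 * w011 - w010 * w001 = 0 → xs = 0)
    ∧ (w000 * w101 - w100 * w001 = 0 → ys = 0) :=
  stmt_4_general w000 w001 w010 w011 w100 w101 w110 w111 h100 hFd1 hF1d hH S hS
end

section
/- Assume all eight w_{ijk} are nonzero, and that F_{1··} = 0, H = 0, F_{·1·} ≠ 0 and F_{0··} ≠ 0. Then the set S = {(x,y) ∈ ℂ² : f₀(x,y) = 0 and f₁(x,y) = 0} is empty. -/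
theorem stmt_5 (w000 w001 w010 w011 w100 w101 w110 w111 : ℂ)
    (h000 : w000 ≠ 0) (h001 : w001 ≠ 0) (h010 : w010 ≠ 0) (h011 : w011 ≠ 0)
    (h100 : w100 ≠ 0) (h101 : w101 ≠ 0) (h110 : w110 ≠ 0) (h111 : w111 ≠ 0)
    (hF1d : w100 * w111 - w110 * w101 = 0)
    (hH : ((w000 * w111 - w001 * w110) - (w010 * w101 - w011 * w100)) ^ 2
      - 4 * (w000 * w011 - w010 * w001) * (w100 * w111 - w110 * w101) = 0)
    (hFd1 : w010 * w111 - w110 * w011 ≠ 0)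
    (hF0d : w000 * w011 - w010 * w001 ≠ 0)
    (S : Set (ℂ × ℂ))
    (hS : S = {p : ℂ × ℂ |
      w000 + w100 * p.1 + w010 * p.2 + w110 * p.1 * p.2 = 0 ∧
      w001 + w101 * p.1 + w011 * p.2 + w111 * p.1 * p.2 = 0}) :
    S = ∅ := by
  have hAsq : ((w000 * w111 - w001 * w110) - (w010 * w101 - w011 * w100)) ^ 2 = 0 := by
    linear_combination hH + 4 * (w000 * w011 - w010 * w001) * hF1d
  have hA : (w000 * w111 - w001 * w110) - (w010 * w101 - w011 * w100) = 0 :=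
    pow_eq_zero_iff (two_ne_zero) |>.mp hAsq
  rw [hS, Set.eq_empty_iff_forall_notMem]
  rintro ⟨x, y⟩ ⟨h1, h2⟩
  apply hF0d
  linear_combination (w011 + w111 * x) * h1 - (w010 + w110 * x) * h2 - x * hA - x ^ 2 * hF1d
end

section
/- Assume all eight w_{ijk} are nonzero, and that F_{·1·} = 0 and F_{1··} = 0. Then the set S = {(x,y) ∈ ℂ² : f₀(x,y) = 0 and f₁(x,y) = 0} is empty if and only if F_{0··} ≠ 0. -/
theorem stmt_6 (w000 w001 w010 w011 w100 w101 w110 w111 : ℂ)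
    (h000 : w000 ≠ 0) (h001 : w001 ≠ 0) (h010 : w010 ≠ 0) (h011 : w011 ≠ 0)
    (h100 : w100 ≠ 0) (h101 : w101 ≠ 0) (h110 : w110 ≠ 0) (h111 : w111 ≠ 0)
    (hFd1 : w010 * w111 - w110 * w011 = 0)
    (hF1d : w100 * w111 - w110 * w101 = 0)
    (S : Set (ℂ × ℂ))
    (hS : S = {p : ℂ × ℂ |
      w000 + w100 * p.1 + w010 * p.2 + w110 * p.1 * p.2 = 0 ∧
      w001 + w101 * p.1 + w011 * p.2 + w111 * p.1 * p.2 = 0}) :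
    S = ∅ ↔ w000 * w011 - w010 * w001 ≠ 0 := by
  subst hS
  constructor
  · intro hemp hF0
    have hmem : ((0 : ℂ), -w000 / w010) ∈ {p : ℂ × ℂ |
        w000 + w100 * p.1 + w010 * p.2 + w110 * p.1 * p.2 = 0 ∧
        w001 + w101 * p.1 + w011 * p.2 + w111 * p.1 * p.2 = 0} := by
      constructor
      · simp only
        field_simp
        ring
      · simp only
        field_simp
        ring
        linear_combination -hF0
    rw [hemp] at hmem
    exact hmem
  · intro hF0
    rw [Set.eq_empty_iff_forall_notMem]
    rintro ⟨x, y⟩ ⟨e0, e1⟩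
    apply hF0
    have key : w111 * w000 - w110 * w001 = 0 := by
      linear_combination w111 * e0 - w110 * e1 - x * hF1d - y * hFd1
    apply mul_left_cancel₀ h111
    rw [mul_zero]
    linear_combination w011 * key - w001 * hFd1
end

section
/- Assume all eight w_{ijk} are nonzero, and that H = 0, F_{·1·} = 0 and F_{1··} = 0. Then F_{0··} = 0 and F_{·0·} = 0, and there exists a nonzero complex number λ such that w_{ij1} = λ·w_{ij0} for all i,j ∈ {0,1} (so the two slices of the tensor are proportional). -/
/-!
With `λ = w₁₁₁ / w₁₁₀`, the vanishing of `F_{·1·}` and `F_{1··}` says that `w₀₁₁`, `w₁₀₁`, `w₁₁₁`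
are `λ` times `w₀₁₀`, `w₁₀₀`, `w₁₁₀`. After this substitution the hyperdeterminant becomes the
perfect square `(w₁₁₀ (λ w₀₀₀ - w₀₀₁))²`, so `H = 0` forces `w₀₀₁ = λ w₀₀₀` as well, and the two
remaining minors then vanish because they are minors of proportional slices.
-/

section Hyperdeterminant

variable {K : Type*}

def hyperdet [CommRing K] (w000 w001 w010 w011 w100 w101 w110 w111 : K) : K :=
  ((w000 * w111 - w001 * w110) - (w010 * w101 - w011 * w100)) ^ 2
    - 4 * (w000 * w011 - w010 * w001) * (w100 * w111 - w110 * w101)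

theorem hyperdet_eq_sq_of_proportional_except_corner [CommRing K] (w000 w001 w010 w100 w110 l : K) :
    hyperdet w000 w001 w010 (l * w010) w100 (l * w100) w110 (l * w110)
      = (w110 * (l * w000 - w001)) ^ 2 := by
  unfold hyperdet
  ring

theorem eq_div_mul_of_mul_sub_mul_eq_zero [Field K] {a b c d : K} (hc : c ≠ 0)
    (h : a * d - c * b = 0) : b = d / c * a := by
  rw [div_mul_eq_mul_div, eq_div_iff hc]
  linear_combination -h

end Hyperdeterminant

theorem stmt_7_general (w000 w001 w010 w011 w100 w101 w110 w111 : ℂ)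
    (h110 : w110 ≠ 0) (h111 : w111 ≠ 0)
    (hH : ((w000 * w111 - w001 * w110) - (w010 * w101 - w011 * w100)) ^ 2
      - 4 * (w000 * w011 - w010 * w001) * (w100 * w111 - w110 * w101) = 0)
    (hFd1 : w010 * w111 - w110 * w011 = 0)
    (hF1d : w100 * w111 - w110 * w101 = 0) :
    w000 * w011 - w010 * w001 = 0
    ∧ w000 * w101 - w100 * w001 = 0
    ∧ ∃ l : ℂ, l ≠ 0 ∧ w001 = l * w000 ∧ w011 = l * w010 ∧
        w101 = l * w100 ∧ w111 = l * w110 := by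
  set l := w111 / w110
  have hl : l ≠ 0 := div_ne_zero h111 h110
  have h11 : w111 = l * w110 := (div_mul_cancel₀ _ h110).symm
  have h01 : w011 = l * w010 := eq_div_mul_of_mul_sub_mul_eq_zero h110 hFd1
  have h10 : w101 = l * w100 := eq_div_mul_of_mul_sub_mul_eq_zero h110 hF1d
  have h00 : w001 = l * w000 := by
    change hyperdet w000 w001 w010 w011 w100 w101 w110 w111 = 0 at hH
    rw [h01, h10, h11, hyperdet_eq_sq_of_proportional_except_corner, sq_eq_zero_iff,
      mul_eq_zero, sub_eq_zero] at hH
    exact (hH.resolve_left h110).symm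
  refine ⟨?_, ?_, l, hl, h00, h01, h10, h11⟩
  · rw [h00, h01]; ring
  · rw [h00, h10]; ring

theorem stmt_7 (w000 w001 w010 w011 w100 w101 w110 w111 : ℂ)
    (h000 : w000 ≠ 0) (h001 : w001 ≠ 0) (h010 : w010 ≠ 0) (h011 : w011 ≠ 0)
    (h100 : w100 ≠ 0) (h101 : w101 ≠ 0) (h110 : w110 ≠ 0) (h111 : w111 ≠ 0)
    (hH : ((w000 * w111 - w001 * w110) - (w010 * w101 - w011 * w100)) ^ 2
      - 4 * (w000 * w011 - w010 * w001) * (w100 * w111 - w110 * w101) = 0)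
    (hFd1 : w010 * w111 - w110 * w011 = 0)
    (hF1d : w100 * w111 - w110 * w101 = 0) :
    w000 * w011 - w010 * w001 = 0
    ∧ w000 * w101 - w100 * w001 = 0
    ∧ ∃ l : ℂ, l ≠ 0 ∧ w001 = l * w000 ∧ w011 = l * w010 ∧
        w101 = l * w100 ∧ w111 = l * w110 :=
  stmt_7_general w000 w001 w010 w011 w100 w101 w110 w111 h110 h111 hH hFd1 hF1d
end

section
/- Assume all eight w_{ijk} are nonzero. Define, for (y₀,y₁) ∈ ℂ², the 2×2 matrix T(y₀,y₁) with first row (w_{000}y₀ + w_{010}y₁, w_{100}y₀ + w_{110}y₁) and second row (w_{001}y₀ + w_{011}y₁, w_{101}y₀ + w_{111}y₁). Then there exist complex numbers a₀, a₁ and a 2×2 complex matrix M such that T(y₀,y₁) = (a₀y₀ + a₁y₁)·M for all (y₀,y₁) ∈ ℂ², if and only if F_{··0} = F_{··1} = F_{0··} = F_{1··} = 0. -/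
/-!
Writing `T y0 y1 = y0 • A + y1 • B`, a factorization `(a0 y0 + a1 y1) • M` exists exactly when
`A` and `B` are both multiples of one matrix. As `A 0 0 ≠ 0` this means
`B = c • A`, i.e. `A 0 0 * B i j = B 0 0 * A i j` for all `i j`; the one relation not among the
four minors, at `(1, 1)`, follows from them after cancelling `A 1 0 ≠ 0`.
-/

theorem exists_smul_forall_iff_exists_smul {R V : Type*} [CommSemiring R] [AddCommMonoid V]
    [Module R V] (A B : V) :
    (∃ (a0 a1 : R) (m : V), ∀ y0 y1 : R, y0 • A + y1 • B = (a0 * y0 + a1 * y1) • m) ↔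
      ∃ (a0 a1 : R) (m : V), A = a0 • m ∧ B = a1 • m := by
  constructor
  · rintro ⟨a0, a1, m, h⟩
    exact ⟨a0, a1, m, by simpa using h 1 0, by simpa using h 0 1⟩
  · rintro ⟨a0, a1, m, rfl, rfl⟩
    exact ⟨a0, a1, m, fun y0 y1 => by simp only [smul_smul, add_smul, mul_comm]⟩

namespace Matrix

variable {m n K : Type*}

theorem mul_apply_eq_mul_apply_of_eq_smul [CommSemiring K] {A B M : Matrix m n K} {a0 a1 : K}
    (hA : A = a0 • M) (hB : B = a1 • M) (i k : m) (j l : n) :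
    A i j * B k l = B i j * A k l := by
  subst hA hB
  simp only [smul_apply, smul_eq_mul]
  ring

theorem eq_smul_of_mul_apply_eq_mul_apply [Field K] {A B : Matrix m n K} {i₀ : m} {j₀ : n}
    (h₀ : A i₀ j₀ ≠ 0) (h : ∀ i j, A i₀ j₀ * B i j = B i₀ j₀ * A i j) :
    B = (B i₀ j₀ / A i₀ j₀) • A := by
  ext i j
  rw [smul_apply, smul_eq_mul, div_mul_eq_mul_div, eq_div_iff h₀, mul_comm, h]

theorem exists_smul_fin_two_iff [Field K] {A B : Matrix (Fin 2) (Fin 2) K}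
    (h00 : A 0 0 ≠ 0) (h10 : A 1 0 ≠ 0) :
    (∃ (a0 a1 : K) (M : Matrix (Fin 2) (Fin 2) K), A = a0 • M ∧ B = a1 • M) ↔
      (A 0 0 * B 0 1 - B 0 0 * A 0 1 = 0 ∧ A 1 0 * B 1 1 - B 1 0 * A 1 1 = 0 ∧
        A 0 0 * B 1 0 - B 0 0 * A 1 0 = 0 ∧ A 0 1 * B 1 1 - B 0 1 * A 1 1 = 0) := by
  simp only [sub_eq_zero]
  constructor
  · rintro ⟨a0, a1, M, hA, hB⟩
    exact ⟨mul_apply_eq_mul_apply_of_eq_smul hA hB .., mul_apply_eq_mul_apply_of_eq_smul hA hB ..,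
      mul_apply_eq_mul_apply_of_eq_smul hA hB .., mul_apply_eq_mul_apply_of_eq_smul hA hB ..⟩
  · rintro ⟨h01, h11, h10', -⟩
    have h11' : A 0 0 * B 1 1 = B 0 0 * A 1 1 :=
      mul_left_cancel₀ h10 (by linear_combination A 0 0 * h11 + A 1 1 * h10')
    refine ⟨1, B 0 0 / A 0 0, A, (one_smul K A).symm, eq_smul_of_mul_apply_eq_mul_apply h00 ?_⟩
    intro i j
    fin_cases i <;> fin_cases j
    exacts [mul_comm _ _, h01, h10', h11']

end Matrix

theorem stmt_8_general (w000 w001 w010 w011 w100 w101 w110 w111 : ℂ)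
    (h000 : w000 ≠ 0) (h001 : w001 ≠ 0)
    (T : ℂ → ℂ → Matrix (Fin 2) (Fin 2) ℂ)
    (hT : ∀ y0 y1 : ℂ, T y0 y1 =
      !![w000 * y0 + w010 * y1, w100 * y0 + w110 * y1;
         w001 * y0 + w011 * y1, w101 * y0 + w111 * y1]) :
    (∃ (a0 a1 : ℂ) (M : Matrix (Fin 2) (Fin 2) ℂ),
        ∀ y0 y1 : ℂ, T y0 y1 = (a0 * y0 + a1 * y1) • M)
    ↔ (w000 * w110 - w010 * w100 = 0 ∧ w001 * w111 - w011 * w101 = 0 ∧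
       w000 * w011 - w010 * w001 = 0 ∧ w100 * w111 - w110 * w101 = 0) := by
  have hT_linear : ∀ y0 y1, T y0 y1 =
      y0 • !![w000, w100; w001, w101] + y1 • !![w010, w110; w011, w111] := by
    intro y0 y1
    rw [hT]
    ext i j
    fin_cases i <;> fin_cases j <;> simp [mul_comm]
  simp_rw [hT_linear]
  rw [exists_smul_forall_iff_exists_smul, Matrix.exists_smul_fin_two_iff (by simpa) (by simpa)]
  simp

theorem stmt_8 (w000 w001 w010 w011 w100 w101 w110 w111 : ℂ)
    (h000 : w000 ≠ 0) (h001 : w001 ≠ 0) (h010 : w010 ≠ 0) (h011 : w011 ≠ 0)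
    (h100 : w100 ≠ 0) (h101 : w101 ≠ 0) (h110 : w110 ≠ 0) (h111 : w111 ≠ 0)
    (T : ℂ → ℂ → Matrix (Fin 2) (Fin 2) ℂ)
    (hT : ∀ y0 y1 : ℂ, T y0 y1 =
      !![w000 * y0 + w010 * y1, w100 * y0 + w110 * y1;
         w001 * y0 + w011 * y1, w101 * y0 + w111 * y1]) :
    (∃ (a0 a1 : ℂ) (M : Matrix (Fin 2) (Fin 2) ℂ),
        ∀ y0 y1 : ℂ, T y0 y1 = (a0 * y0 + a1 * y1) • M)
    ↔ (w000 * w110 - w010 * w100 = 0 ∧ w001 * w111 - w011 * w101 = 0 ∧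
       w000 * w011 - w010 * w001 = 0 ∧ w100 * w111 - w110 * w101 = 0) :=
  stmt_8_general w000 w001 w010 w011 w100 w101 w110 w111 h000 h001 T hT
end

section
/- Assume all eight w_{ijk} are nonzero, that F_{··0} = 0 and F_{··1} = 0 (both quadrics are singular), and that F_{0··}, F_{1··}, F_{·0·}, F_{·1·} and H are all nonzero. Then the set S = {(x,y) ∈ ℂ² : f₀(x,y) = 0 and f₁(x,y) = 0} has exactly two elements, and every element (x,y) of S satisfies x ≠ 0 and y ≠ 0. -/
/-!
A bilinear quadric `a + b x + c y + d x y` with `a d = b c` and `a ≠ 0` is, up to the factor `a`,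
the product `(a + b x) (a + c y)`, so its zero set is the union of a vertical and a horizontal
line. Two such cross-shaped curves meet in the two "mixed" corners only: the minors `F_{·0·}`
and `F_{0··}` say that the two vertical lines, respectively the two horizontal lines, are distinct.
-/

section SingularQuadric

variable {K : Type*} [Field K]

theorem mul_bilinear_eq_mul_of_singular {a b c d : K} (hsing : a * d - c * b = 0) (x y : K) :
    a * (a + b * x + c * y + d * x * y) = (a + b * x) * (a + c * y) := by
  linear_combination x * y * hsing

theorem bilinear_eq_zero_iff_of_singular {a b c d : K} (ha : a ≠ 0) (hb : b ≠ 0) (hc : c ≠ 0)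
    (hsing : a * d - c * b = 0) (x y : K) :
    a + b * x + c * y + d * x * y = 0 ↔ x = -a / b ∨ y = -a / c := by
  rw [← mul_right_inj' ha, mul_zero, mul_bilinear_eq_mul_of_singular hsing, mul_eq_zero,
    eq_div_iff hb, eq_div_iff hc]
  constructor <;> rintro (h | h) <;> [left; right; left; right] <;> linear_combination h

theorem neg_div_ne_neg_div {a b a' b' : K} (hb : b ≠ 0) (hb' : b' ≠ 0)
    (h : a * b' - b * a' ≠ 0) : -a / b ≠ -a' / b' := by
  rw [Ne, div_eq_div_iff hb hb']
  exact fun heq ↦ h (by linear_combination -heq)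

end SingularQuadric

theorem Set.setOf_or_and_or_eq_pair {α β : Type*} {x₀ x₁ : α} {y₀ y₁ : β} (hx : x₀ ≠ x₁)
    (hy : y₀ ≠ y₁) :
    {p : α × β | (p.1 = x₀ ∨ p.2 = y₀) ∧ (p.1 = x₁ ∨ p.2 = y₁)} = {(x₀, y₁), (x₁, y₀)} := by
  ext ⟨x, y⟩
  simp only [Set.mem_ofPred_eq, Set.mem_insert_iff, Set.mem_singleton_iff, Prod.mk.injEq]
  constructor
  · rintro ⟨rfl | rfl, rfl | rfl⟩
    · exact absurd rfl hx
    · exact .inl ⟨rfl, rfl⟩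
    · exact .inr ⟨rfl, rfl⟩
    · exact absurd rfl hy
  · rintro (⟨rfl, rfl⟩ | ⟨rfl, rfl⟩)
    · exact ⟨.inl rfl, .inr rfl⟩
    · exact ⟨.inr rfl, .inl rfl⟩

theorem stmt_11_general (w000 w001 w010 w011 w100 w101 w110 w111 : ℂ)
    (h000 : w000 ≠ 0) (h001 : w001 ≠ 0) (h010 : w010 ≠ 0) (h011 : w011 ≠ 0)
    (h100 : w100 ≠ 0) (h101 : w101 ≠ 0)
    (hFdd0 : w000 * w110 - w010 * w100 = 0)
    (hFdd1 : w001 * w111 - w011 * w101 = 0)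
    (hF0d : w000 * w011 - w010 * w001 ≠ 0)
    (hFd0 : w000 * w101 - w100 * w001 ≠ 0)
    (S : Set (ℂ × ℂ))
    (hS : S = {p : ℂ × ℂ |
      w000 + w100 * p.1 + w010 * p.2 + w110 * p.1 * p.2 = 0 ∧
      w001 + w101 * p.1 + w011 * p.2 + w111 * p.1 * p.2 = 0}) :
    S.ncard = 2 ∧ ∀ p ∈ S, p.1 ≠ 0 ∧ p.2 ≠ 0 := by
  have hx := neg_div_ne_neg_div h100 h101 hFd0
  have hS' : S = {(-w000 / w100, -w001 / w011), (-w001 / w101, -w000 / w010)} := by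
    rw [hS, ← Set.setOf_or_and_or_eq_pair hx (neg_div_ne_neg_div h010 h011 hF0d)]
    simp only [bilinear_eq_zero_iff_of_singular h000 h100 h010 hFdd0,
      bilinear_eq_zero_iff_of_singular h001 h101 h011 hFdd1]
  refine ⟨hS' ▸ Set.ncard_pair (by simp [hx]), ?_⟩
  rw [hS']
  rintro p (rfl | rfl) <;> simp [h000, h001, h010, h011, h100, h101]

theorem stmt_11 (w000 w001 w010 w011 w100 w101 w110 w111 : ℂ)
    (h000 : w000 ≠ 0) (h001 : w001 ≠ 0) (h010 : w010 ≠ 0) (h011 : w011 ≠ 0)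
    (h100 : w100 ≠ 0) (h101 : w101 ≠ 0) (h110 : w110 ≠ 0) (h111 : w111 ≠ 0)
    (hFdd0 : w000 * w110 - w010 * w100 = 0)
    (hFdd1 : w001 * w111 - w011 * w101 = 0)
    (hF0d : w000 * w011 - w010 * w001 ≠ 0)
    (hF1d : w100 * w111 - w110 * w101 ≠ 0)
    (hFd0 : w000 * w101 - w100 * w001 ≠ 0)
    (hFd1 : w010 * w111 - w110 * w011 ≠ 0)
    (hH : ((w000 * w111 - w001 * w110) - (w010 * w101 - w011 * w100)) ^ 2
      - 4 * (w000 * w011 - w010 * w001) * (w100 * w111 - w110 * w101) ≠ 0)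
    (S : Set (ℂ × ℂ))
    (hS : S = {p : ℂ × ℂ |
      w000 + w100 * p.1 + w010 * p.2 + w110 * p.1 * p.2 = 0 ∧
      w001 + w101 * p.1 + w011 * p.2 + w111 * p.1 * p.2 = 0}) :
    S.ncard = 2 ∧ ∀ p ∈ S, p.1 ≠ 0 ∧ p.2 ≠ 0 :=
  stmt_11_general w000 w001 w010 w011 w100 w101 w110 w111 h000 h001 h010 h011 h100 h101 hFdd0 hFdd1
    hF0d hFd0 S hS
end

section
/- Let w_{ijk}, for i,j ∈ {0,1} and k ∈ {0,1,2}, be twelve nonzero complex numbers. For 0 ≤ k < l ≤ 2 set a_{kl} = w_{00k}w_{10l} − w_{10k}w_{00l}, c_{kl} = w_{01k}w_{11l} − w_{11k}w_{01l}, and b_{kl} = w_{00k}w_{11l} + w_{01k}w_{10l} − w_{10k}w_{01l} − w_{11k}w_{00l}. Let W̃ be the 3×3 complex matrix with rows (a_{01}, b_{01}, c_{01}), (a_{02}, b_{02}, c_{02}), (a_{12}, b_{12}, c_{12}), and let B be the 3×4 complex matrix whose k-th row is (w_{00k}, w_{01k}, w_{10k}, w_{11k}) for k = 0,1,2. Then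 W̃ has rank at most 1 if and only if B has rank at most 2 (equivalently, all 2×2 minors of W̃ vanish if and only if all 3×3 minors of B vanish). -/
/-!
Let `x, y, u, v ∈ ℂ³` be the columns of `B`. Up to order and sign, the columns of `W̃` are the
coefficients of the quadratic pencil `(x + t y) × (u + t v) = x×u + t (x×v + y×u) + t² (y×v)`.
If `rank B ≤ 2`, some `g ≠ 0` has `g ⬝ x = g ⬝ y = g ⬝ u = g ⬝ v = 0`, and then
`g × (p × q) = (g ⬝ q) p - (g ⬝ p) q = 0` shows that every coefficient is a multiple of `g`.
Conversely, if the coefficients are `ρ₀ g, ρ₁ g, ρ₂ g` with `ρ ≠ 0 ≠ g`, then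
`(x + t y) ⬝ ((x + t y) × (u + t v)) = 0` reads `ρ(t) · (g ⬝ (x + t y)) = 0` in `ℂ[t]`, so
`g ⊥ x, y`, and likewise `g ⊥ u, v`; if all coefficients vanish, then `x ∥ u` and `y ∥ v`, which
again gives `rank B ≤ 2`.
-/

open Module Submodule Matrix

section

variable {K : Type*} [Field K]

namespace Matrix

variable {m n : Type*} [Fintype n]

theorem rank_le_one_iff_exists_smul [Finite m] {A : Matrix m n K} :
    A.rank ≤ 1 ↔ ∃ v, ∀ i, ∃ c : K, c • v = A i := by
  rw [rank_eq_finrank_span_row]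
  constructor
  · intro h
    rw [← Nat.cast_le (α := Cardinal), finrank_eq_rank, Nat.cast_one,
      rank_submodule_le_one_iff] at h
    obtain ⟨v, -, hv⟩ := h
    exact ⟨v, fun i => mem_span_singleton.mp (hv (subset_span ⟨i, rfl⟩))⟩
  · rintro ⟨v, hv⟩
    calc finrank K (span K (Set.range A.row))
        ≤ finrank K (K ∙ v) :=
          finrank_mono (span_le.2 (Set.range_subset_iff.2 fun i => mem_span_singleton.2 (hv i)))
      _ ≤ 1 := (finrank_span_le_card ({v} : Set (n → K))).trans (by simp)

theorem rank_lt_card_width_iff_exists_mulVec_eq_zero {A : Matrix m n K} :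
    A.rank < Fintype.card n ↔ ∃ g ≠ 0, A *ᵥ g = 0 := by
  have h := A.mulVecLin.finrank_range_add_finrank_ker
  rw [finrank_fintype_fun_eq_card] at h
  have hker : finrank K A.mulVecLin.ker ≠ 0 ↔ ∃ g ≠ 0, A *ᵥ g = 0 := by
    rw [Ne, Submodule.finrank_eq_zero, ← Ne, Submodule.ne_bot_iff]
    simp [and_comm]
  rw [rank, ← hker]
  omega

end Matrix

theorem exists_smul_eq_of_cross_eq_zero {g c : Fin 3 → K} (hg : g ≠ 0) (h : g ⨯₃ c = 0) :
    ∃ a : K, a • g = c := by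
  have hdep : ¬LinearIndependent K ![g, c] := by
    rw [← crossProduct_ne_zero_iff_linearIndependent, not_not, h]
  simpa [LinearIndependent.pair_iff' hg] using hdep

theorem finrank_span_pair_le_one_of_cross_eq_zero {x u : Fin 3 → K} (h : x ⨯₃ u = 0) :
    (Set.range ![x, u]).finrank K ≤ 1 := by
  have hdep : ¬LinearIndependent K ![x, u] := by
    rw [← crossProduct_ne_zero_iff_linearIndependent, not_not, h]
  rw [linearIndependent_iff_card_eq_finrank_span, Fintype.card_fin] at hdep
  have := finrank_range_le_card (R := K) ![x, u]
  rw [Fintype.card_fin] at this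
  omega

/-- Row `i` is the coefficient of `t ^ i` in `(x + t • y) ⨯₃ (u + t • v)`. -/
def crossPencil (x y u v : Fin 3 → K) : Matrix (Fin 3) (Fin 3) K :=
  Matrix.of ![x ⨯₃ u, x ⨯₃ v + y ⨯₃ u, y ⨯₃ v]

theorem crossPencil_swap (x y u v : Fin 3 → K) :
    crossPencil u v x y = -crossPencil x y u v := by
  ext i j
  fin_cases i <;> fin_cases j <;> simp [crossPencil, cross_apply] <;> ring

-- The hypotheses are the coefficients of `(ρ₀ + ρ₁ t + ρ₂ t²) (α + β t) = 0`.
theorem eq_zero_of_quadratic_mul_linear_eq_zero {ρ : Fin 3 → K} (hρ : ρ ≠ 0) {α β : K}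
    (h0 : ρ 0 * α = 0) (h1 : ρ 1 * α + ρ 0 * β = 0) (h2 : ρ 2 * α + ρ 1 * β = 0)
    (h3 : ρ 2 * β = 0) : α = 0 ∧ β = 0 := by
  have hα : α ^ 3 • ρ = 0 := by
    ext j
    fin_cases j <;>
      simp only [Fin.zero_eta, Fin.mk_one, Fin.reduceFinMk, Pi.smul_apply, smul_eq_mul,
        Pi.zero_apply]
    · linear_combination α ^ 2 * h0
    · linear_combination α ^ 2 * h1 - α * β * h0
    · linear_combination α ^ 2 * h2 - α * β * h1 + β ^ 2 * h0
  have hβ : β ^ 3 • ρ = 0 := by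
    ext j
    fin_cases j <;>
      simp only [Fin.zero_eta, Fin.mk_one, Fin.reduceFinMk, Pi.smul_apply, smul_eq_mul,
        Pi.zero_apply]
    · linear_combination β ^ 2 * h1 - α * β * h2 + α ^ 2 * h3
    · linear_combination β ^ 2 * h2 - α * β * h3
    · linear_combination β ^ 2 * h3
  exact ⟨pow_eq_zero_iff three_ne_zero |>.mp ((smul_eq_zero.mp hα).resolve_right hρ),
    pow_eq_zero_iff three_ne_zero |>.mp ((smul_eq_zero.mp hβ).resolve_right hρ)⟩

theorem dotProduct_eq_zero_of_crossPencil_eq_smul {x y u v g ρ : Fin 3 → K} (hρ : ρ ≠ 0)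
    (hJ : ∀ i, crossPencil x y u v i = ρ i • g) : x ⬝ᵥ g = 0 ∧ y ⬝ᵥ g = 0 := by
  have h0 : x ⨯₃ u = ρ 0 • g := hJ 0
  have h1 : x ⨯₃ v + y ⨯₃ u = ρ 1 • g := hJ 1
  have h2 : y ⨯₃ v = ρ 2 • g := hJ 2
  -- the coefficients of `(x + t • y) ⬝ᵥ (x + t • y) ⨯₃ (u + t • v) = 0`
  have e0 := dot_self_cross x u
  have e1 : x ⬝ᵥ (x ⨯₃ v + y ⨯₃ u) + y ⬝ᵥ x ⨯₃ u = 0 := by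
    simp [cross_apply, dotProduct, Fin.sum_univ_three]; ring
  have e2 : x ⬝ᵥ y ⨯₃ v + y ⬝ᵥ (x ⨯₃ v + y ⨯₃ u) = 0 := by
    simp [cross_apply, dotProduct, Fin.sum_univ_three]; ring
  have e3 := dot_self_cross y v
  rw [h0] at e0
  rw [h0, h1] at e1
  rw [h1, h2] at e2
  rw [h2] at e3
  simp only [dotProduct_smul, smul_eq_mul] at e0 e1 e2 e3
  exact eq_zero_of_quadratic_mul_linear_eq_zero hρ e0 e1 e2 e3

theorem rank_le_two_of_cross_eq_zero {x y u v : Fin 3 → K} (hxu : x ⨯₃ u = 0)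
    (hyv : y ⨯₃ v = 0) : (Matrix.of ![x, y, u, v]).rank ≤ 2 := by
  have hspan : span K (Set.range (Matrix.of ![x, y, u, v]).row) ≤
      span K (Set.range ![x, u]) ⊔ span K (Set.range ![y, v]) := by
    refine span_le.2 (Set.range_subset_iff.2 fun i => ?_)
    fin_cases i
    · exact mem_sup_left (subset_span ⟨0, rfl⟩)
    · exact mem_sup_right (subset_span ⟨0, rfl⟩)
    · exact mem_sup_left (subset_span ⟨1, rfl⟩)
    · exact mem_sup_right (subset_span ⟨1, rfl⟩)
  rw [rank_eq_finrank_span_row]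
  calc _ ≤ _ := finrank_mono hspan
    _ ≤ _ := finrank_add_le_finrank_add_finrank _ _
    _ ≤ 1 + 1 := add_le_add (finrank_span_pair_le_one_of_cross_eq_zero hxu)
        (finrank_span_pair_le_one_of_cross_eq_zero hyv)

theorem crossPencil_rank_le_one_of_mulVec_eq_zero {x y u v g : Fin 3 → K} (hg : g ≠ 0)
    (h : Matrix.of ![x, y, u, v] *ᵥ g = 0) : (crossPencil x y u v).rank ≤ 1 := by
  have hx : x ⬝ᵥ g = 0 := congrFun h 0
  have hy : y ⬝ᵥ g = 0 := congrFun h 1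
  have hu : u ⬝ᵥ g = 0 := congrFun h 2
  have hv : v ⬝ᵥ g = 0 := congrFun h 3
  have hcross : ∀ p q : Fin 3 → K, p ⬝ᵥ g = 0 → q ⬝ᵥ g = 0 → g ⨯₃ (p ⨯₃ q) = 0 := by
    intro p q hp hq
    rw [cross_cross_eq_smul_sub_smul', dotProduct_comm, hq, hp, zero_smul, zero_smul, sub_zero]
  refine rank_le_one_iff_exists_smul.2 ⟨g, fun i => exists_smul_eq_of_cross_eq_zero hg ?_⟩
  fin_cases i
  · exact hcross x u hx hu
  · change g ⨯₃ (x ⨯₃ v + y ⨯₃ u) = 0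
    rw [map_add, hcross x v hx hv, hcross y u hy hu, add_zero]
  · exact hcross y v hy hv

theorem crossPencil_rank_le_one_iff (x y u v : Fin 3 → K) :
    (crossPencil x y u v).rank ≤ 1 ↔ (Matrix.of ![x, y, u, v]).rank ≤ 2 := by
  constructor
  · intro h
    obtain ⟨g, hg⟩ := rank_le_one_iff_exists_smul.1 h
    choose ρ hρ using hg
    by_cases hJ : crossPencil x y u v = 0
    · exact rank_le_two_of_cross_eq_zero (congrFun hJ 0) (congrFun hJ 2)
    have hρ0 : ρ ≠ 0 := by
      rintro rfl
      exact hJ (by ext i j; simp [← hρ i])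
    obtain ⟨hx, hy⟩ := dotProduct_eq_zero_of_crossPencil_eq_smul hρ0 fun i => (hρ i).symm
    obtain ⟨hu, hv⟩ := dotProduct_eq_zero_of_crossPencil_eq_smul (neg_ne_zero.2 hρ0)
      (x := u) (y := v) (u := x) (v := y) (g := g)
      fun i => by ext j; rw [crossPencil_swap, neg_apply, ← hρ i]; simp
    have hg0 : g ≠ 0 := by
      rintro rfl
      exact hJ (by ext i j; simp [← hρ i])
    refine Nat.le_of_lt_succ (rank_lt_card_width_iff_exists_mulVec_eq_zero.2 ⟨g, hg0, ?_⟩)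
    ext i
    fin_cases i
    exacts [hx, hy, hu, hv]
  · intro h
    obtain ⟨g, hg, hmul⟩ := rank_lt_card_width_iff_exists_mulVec_eq_zero.1 (Nat.lt_succ_of_le h)
    exact crossPencil_rank_le_one_of_mulVec_eq_zero hg hmul

end

theorem stmt_13_general (w : Fin 2 → Fin 2 → Fin 3 → ℂ)
    (a c b : Fin 3 → Fin 3 → ℂ)
    (ha : ∀ k l, a k l = w 0 0 k * w 1 0 l - w 1 0 k * w 0 0 l)
    (hc : ∀ k l, c k l = w 0 1 k * w 1 1 l - w 1 1 k * w 0 1 l)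
    (hb : ∀ k l, b k l = w 0 0 k * w 1 1 l + w 0 1 k * w 1 0 l
      - w 1 0 k * w 0 1 l - w 1 1 k * w 0 0 l)
    (Wt : Matrix (Fin 3) (Fin 3) ℂ)
    (hWt : Wt = !![a 0 1, b 0 1, c 0 1; a 0 2, b 0 2, c 0 2; a 1 2, b 1 2, c 1 2])
    (B : Matrix (Fin 3) (Fin 4) ℂ)
    (hB : B = !![w 0 0 0, w 0 1 0, w 1 0 0, w 1 1 0;
                 w 0 0 1, w 0 1 1, w 1 0 1, w 1 1 1;
                 w 0 0 2, w 0 1 2, w 1 0 2, w 1 1 2]) :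
    Wt.rank ≤ 1 ↔ B.rank ≤ 2 := by
  have hB' : B = (Matrix.of ![w 0 0, w 0 1, w 1 0, w 1 1])ᵀ := by
    rw [hB]; ext i j; fin_cases i <;> fin_cases j <;> rfl
  -- `Wt` lists the components `2, 1, 0` of the cross pencil, the middle one with a sign
  have hWt' : Wt = !![0, 0, 1; 0, -1, 0; 1, 0, 0] *
      (crossPencil (w 0 0) (w 0 1) (w 1 0) (w 1 1))ᵀ := by
    rw [hWt]; ext i j
    fin_cases i <;> fin_cases j <;>
      simp [crossPencil, cross_apply, ha, hb, hc, Matrix.mul_apply, Fin.sum_univ_three] <;> ring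
  rw [hB', hWt', rank_mul_eq_right_of_isUnit_det _ _ (by simp [det_fin_three]), rank_transpose,
    rank_transpose]
  exact crossPencil_rank_le_one_iff _ _ _ _

theorem stmt_13 (w : Fin 2 → Fin 2 → Fin 3 → ℂ)
    (hw : ∀ i j k, w i j k ≠ 0)
    (a c b : Fin 3 → Fin 3 → ℂ)
    (ha : ∀ k l, a k l = w 0 0 k * w 1 0 l - w 1 0 k * w 0 0 l)
    (hc : ∀ k l, c k l = w 0 1 k * w 1 1 l - w 1 1 k * w 0 1 l)
    (hb : ∀ k l, b k l = w 0 0 k * w 1 1 l + w 0 1 k * w 1 0 l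
      - w 1 0 k * w 0 1 l - w 1 1 k * w 0 0 l)
    (Wt : Matrix (Fin 3) (Fin 3) ℂ)
    (hWt : Wt = !![a 0 1, b 0 1, c 0 1; a 0 2, b 0 2, c 0 2; a 1 2, b 1 2, c 1 2])
    (B : Matrix (Fin 3) (Fin 4) ℂ)
    (hB : B = !![w 0 0 0, w 0 1 0, w 1 0 0, w 1 1 0;
                 w 0 0 1, w 0 1 1, w 1 0 1, w 1 1 1;
                 w 0 0 2, w 0 1 2, w 1 0 2, w 1 1 2]) :
    Wt.rank ≤ 1 ↔ B.rank ≤ 2 :=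
  stmt_13_general w a c b ha hc hb Wt hWt B hB
end

section
/- Let w_{ijk}, for i,j ∈ {0,1} and k ∈ {0,1,2}, be twelve nonzero complex numbers, and for k = 0,1,2 define the bilinear form q_k(x₀,x₁,y₀,y₁) = w_{00k}x₀y₀ + w_{01k}x₀y₁ + w_{10k}x₁y₀ + w_{11k}x₁y₁. For 0 ≤ k < l ≤ 2 define the 2×2×2 hyperdeterminant H_{kl} = ((w_{00k}w_{11l} − w_{00l}w_{11k}) − (w_{01k}w_{10l} − w_{01l}w_{10k}))² − 4·(w_{00k}w_{01l} − w_{01k}w_{00l})·(w_{10k}w_{11l} − w_{11k}w_{10l}), and set F_{··0} = w_{000}w_{110} − w_{010}w_{100}. If H_{01} = 0, H_{02} = 0 and F_{··0} = 0, then there exist nonzero vectors (x₀,x₁) ∈ ℂ²∖{(0,0)} and (y₀,y₁) ∈ ℂ²∖{(0,0)} such that q₀ = q₁ = q₂ = 0 at (x₀,x₁,y₀,y₁). -/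
theorem stmt_15 (w : Fin 2 → Fin 2 → Fin 3 → ℂ)
    (hw : ∀ i j k, w i j k ≠ 0)
    (q : Fin 3 → ℂ → ℂ → ℂ → ℂ → ℂ)
    (hq : ∀ k x0 x1 y0 y1, q k x0 x1 y0 y1 =
      w 0 0 k * x0 * y0 + w 0 1 k * x0 * y1 + w 1 0 k * x1 * y0 + w 1 1 k * x1 * y1)
    (H : Fin 3 → Fin 3 → ℂ)
    (hH : ∀ k l, H k l =
      ((w 0 0 k * w 1 1 l - w 0 0 l * w 1 1 k) - (w 0 1 k * w 1 0 l - w 0 1 l * w 1 0 k)) ^ 2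
      - 4 * (w 0 0 k * w 0 1 l - w 0 1 k * w 0 0 l) * (w 1 0 k * w 1 1 l - w 1 1 k * w 1 0 l))
    (hH01 : H 0 1 = 0) (hH02 : H 0 2 = 0)
    (hF : w 0 0 0 * w 1 1 0 - w 0 1 0 * w 1 0 0 = 0) :
    ∃ (x0 x1 y0 y1 : ℂ), (x0, x1) ≠ ((0 : ℂ), (0 : ℂ)) ∧ (y0, y1) ≠ ((0 : ℂ), (0 : ℂ)) ∧
      q 0 x0 x1 y0 y1 = 0 ∧ q 1 x0 x1 y0 y1 = 0 ∧ q 2 x0 x1 y0 y1 = 0 := by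
  have h1 := (hH 0 1).symm.trans hH01
  have h2 := (hH 0 2).symm.trans hH02
  refine ⟨w 1 0 0, -w 0 0 0, w 0 1 0, -w 0 0 0, ?_, ?_, ?_, ?_, ?_⟩
  · intro h
    exact hw 1 0 0 (congrArg Prod.fst h)
  · intro h
    exact hw 0 1 0 (congrArg Prod.fst h)
  · rw [hq]
    linear_combination (w 0 0 0) * hF
  · rw [hq]
    have key : (w 0 0 1 * (w 1 0 0) * (w 0 1 0) + w 0 1 1 * (w 1 0 0) * (-w 0 0 0)
        + w 1 0 1 * (-w 0 0 0) * (w 0 1 0) + w 1 1 1 * (-w 0 0 0) * (-w 0 0 0)) ^ 2 = 0 := by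
      linear_combination (w 0 0 0) ^ 2 * h1 -
        (w 0 1 0 * w 1 0 0 * (w 0 0 1) ^ 2 + w 0 0 0 * w 1 1 0 * (w 0 0 1) ^ 2
          - 2 * w 0 0 0 * w 1 0 0 * w 0 0 1 * w 0 1 1
          - 2 * w 0 0 0 * w 0 1 0 * w 0 0 1 * w 1 0 1
          + 4 * (w 0 0 0) ^ 2 * w 0 1 1 * w 1 0 1
          - 2 * (w 0 0 0) ^ 2 * w 0 0 1 * w 1 1 1) * hF
    exact pow_eq_zero_iff (by norm_num) |>.mp key
  · rw [hq]
    have key : (w 0 0 2 * (w 1 0 0) * (w 0 1 0) + w 0 1 2 * (w 1 0 0) * (-w 0 0 0)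
        + w 1 0 2 * (-w 0 0 0) * (w 0 1 0) + w 1 1 2 * (-w 0 0 0) * (-w 0 0 0)) ^ 2 = 0 := by
      linear_combination (w 0 0 0) ^ 2 * h2 -
        (w 0 1 0 * w 1 0 0 * (w 0 0 2) ^ 2 + w 0 0 0 * w 1 1 0 * (w 0 0 2) ^ 2
          - 2 * w 0 0 0 * w 1 0 0 * w 0 0 2 * w 0 1 2
          - 2 * w 0 0 0 * w 0 1 0 * w 0 0 2 * w 1 0 2
          + 4 * (w 0 0 0) ^ 2 * w 0 1 2 * w 1 0 2
          - 2 * (w 0 0 0) ^ 2 * w 0 0 2 * w 1 1 2) * hF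
    exact pow_eq_zero_iff (by norm_num) |>.mp key
end

section
/- There exist eight nonzero complex numbers w_{ijk} (i,j,k ∈ {0,1}) such that F_{0··} = 0, F_{·0·} = 0 and F_{··0} = 0, while F_{1··}, F_{·1·}, F_{··1} and H are all nonzero. -/
theorem stmt_16 :
    ∃ w000 w001 w010 w011 w100 w101 w110 w111 : ℂ,
      w000 ≠ 0 ∧ w001 ≠ 0 ∧ w010 ≠ 0 ∧ w011 ≠ 0 ∧
      w100 ≠ 0 ∧ w101 ≠ 0 ∧ w110 ≠ 0 ∧ w111 ≠ 0 ∧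
      w000 * w011 - w010 * w001 = 0 ∧
      w000 * w101 - w100 * w001 = 0 ∧
      w000 * w110 - w010 * w100 = 0 ∧
      w100 * w111 - w110 * w101 ≠ 0 ∧
      w010 * w111 - w110 * w011 ≠ 0 ∧
      w001 * w111 - w011 * w101 ≠ 0 ∧
      ((w000 * w111 - w001 * w110) - (w010 * w101 - w011 * w100)) ^ 2
        - 4 * (w000 * w011 - w010 * w001) * (w100 * w111 - w110 * w101) ≠ 0 := by
  refine ⟨1, 1, 1, 1, 1, 1, 1, 2, ?_, ?_, ?_, ?_, ?_, ?_, ?_, ?_, ?_, ?_, ?_, ?_, ?_, ?_, ?_⟩ <;>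
    norm_num
end

section
/- Assume all eight w_{ijk} are nonzero and that H ≠ 0. For k = 0,1 define the bilinear form q_k(x₀,x₁,y₀,y₁) = w_{00k}x₀y₀ + w_{01k}x₀y₁ + w_{10k}x₁y₀ + w_{11k}x₁y₁. Then the system q₀ = q₁ = 0 has exactly two solutions in ℙ¹×ℙ¹: there exist pairs (x,y) and (x',y') with x, x', y, y' ∈ ℂ²∖{(0,0)}, both satisfying q₀ = q₁ = 0, such that there are no scalars λ, μ ∈ ℂ with x' = λx and y' = μy, and every pair (x'', y'') with x'', y'' ∈ ℂ²∖{(0,0)} satisfying q₀ = q₁ = 0 is, componentwise, a nonzero scalar multiple of (x,y) or of (x',y'). -/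
/-- If (a,b) ≠ (0,0), any solution of a z₁ + b z₂ = 0 is a multiple of (b, -a). -/
private lemma span2 (a b : ℂ) (hab : ¬(a = 0 ∧ b = 0)) (z : ℂ × ℂ)
    (hz : a * z.1 + b * z.2 = 0) : ∃ m : ℂ, z = m • ((b, -a) : ℂ × ℂ) := by
  by_cases hb : b = 0
  · have ha : a ≠ 0 := fun h => hab ⟨h, hb⟩
    have h1 : a * z.1 = 0 := by rw [hb] at hz; linear_combination hz
    have hz1 : z.1 = 0 := (mul_eq_zero.mp h1).resolve_left ha
    refine ⟨-z.2 / a, ?_⟩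
    rw [Prod.smul_mk, Prod.ext_iff]
    constructor
    · simp [hz1, hb]
    · simp only [smul_eq_mul]
      field_simp
  · refine ⟨z.1 / b, ?_⟩
    rw [Prod.smul_mk, Prod.ext_iff]
    constructor
    · simp only [smul_eq_mul]
      field_simp
    · simp only [smul_eq_mul]
      rw [mul_neg, div_mul_eq_mul_div, eq_comm, neg_eq_iff_eq_neg, div_eq_iff hb]
      linear_combination hz

/-- Kernel of a singular, nonzero 2×2 matrix: existence of a nonzero kernel
vector spanning all solutions. -/
private lemma ker2 (a b c d : ℂ) (hdet : a * d - b * c = 0)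
    (h : ¬(a = 0 ∧ b = 0 ∧ c = 0 ∧ d = 0)) :
    ∃ y : ℂ × ℂ, y ≠ 0 ∧ a * y.1 + b * y.2 = 0 ∧ c * y.1 + d * y.2 = 0 ∧
      ∀ z : ℂ × ℂ, a * z.1 + b * z.2 = 0 → c * z.1 + d * z.2 = 0 →
        ∃ m : ℂ, z = m • y := by
  by_cases hab : a = 0 ∧ b = 0
  · have hcd : ¬(c = 0 ∧ d = 0) := fun hcd => h ⟨hab.1, hab.2, hcd.1, hcd.2⟩
    refine ⟨(d, -c), ?_, ?_, by ring, fun z _ hz2 => span2 c d hcd z hz2⟩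
    · intro h0
      rw [Prod.ext_iff] at h0
      simp only [Prod.fst_zero, Prod.snd_zero, neg_eq_zero] at h0
      exact hcd ⟨h0.2, h0.1⟩
    · rw [hab.1, hab.2]; ring
  · refine ⟨(b, -a), ?_, by ring, by linear_combination -hdet,
      fun z hz1 _ => span2 a b hab z hz1⟩
    intro h0
    rw [Prod.ext_iff] at h0
    simp only [Prod.fst_zero, Prod.snd_zero, neg_eq_zero] at h0
    exact hab ⟨h0.2, h0.1⟩

theorem stmt_18 (w000 w001 w010 w011 w100 w101 w110 w111 : ℂ)
    (h000 : w000 ≠ 0) (h001 : w001 ≠ 0) (h010 : w010 ≠ 0) (h011 : w011 ≠ 0)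
    (h100 : w100 ≠ 0) (h101 : w101 ≠ 0) (h110 : w110 ≠ 0) (h111 : w111 ≠ 0)
    (hH : ((w000 * w111 - w001 * w110) - (w010 * w101 - w011 * w100)) ^ 2
      - 4 * (w000 * w011 - w010 * w001) * (w100 * w111 - w110 * w101) ≠ 0)
    (q0 q1 : ℂ × ℂ → ℂ × ℂ → ℂ)
    (hq0 : ∀ x y, q0 x y = w000 * x.1 * y.1 + w010 * x.1 * y.2
      + w100 * x.2 * y.1 + w110 * x.2 * y.2)
    (hq1 : ∀ x y, q1 x y = w001 * x.1 * y.1 + w011 * x.1 * y.2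
      + w101 * x.2 * y.1 + w111 * x.2 * y.2) :
    ∃ x y x' y' : ℂ × ℂ,
      x ≠ 0 ∧ y ≠ 0 ∧ x' ≠ 0 ∧ y' ≠ 0 ∧
      q0 x y = 0 ∧ q1 x y = 0 ∧ q0 x' y' = 0 ∧ q1 x' y' = 0 ∧
      (¬ ∃ l m : ℂ, x' = l • x ∧ y' = m • y) ∧
      ∀ x'' y'' : ℂ × ℂ, x'' ≠ 0 → y'' ≠ 0 →
        q0 x'' y'' = 0 → q1 x'' y'' = 0 →
        ((∃ l m : ℂ, l ≠ 0 ∧ m ≠ 0 ∧ x'' = l • x ∧ y'' = m • y) ∨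
         (∃ l m : ℂ, l ≠ 0 ∧ m ≠ 0 ∧ x'' = l • x' ∧ y'' = m • y')) := by
  obtain ⟨A, hA⟩ : ∃ A : ℂ, A = w000 * w011 - w010 * w001 := ⟨_, rfl⟩
  obtain ⟨B, hB⟩ : ∃ B : ℂ,
      B = w000 * w111 - w001 * w110 - w010 * w101 + w011 * w100 := ⟨_, rfl⟩
  obtain ⟨C, hC⟩ : ∃ C : ℂ, C = w100 * w111 - w110 * w101 := ⟨_, rfl⟩
  have hH' : B ^ 2 - 4 * A * C ≠ 0 := by
    intro h; apply hH; rw [hA, hB, hC] at h; linear_combination h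
  -- rank ≥ 1 at every point
  have hrank : ∀ u v : ℂ, ¬(u = 0 ∧ v = 0) →
      ¬(w000 * u + w100 * v = 0 ∧ w010 * u + w110 * v = 0 ∧
        w001 * u + w101 * v = 0 ∧ w011 * u + w111 * v = 0) := by
    rintro u v huv ⟨ha, hb, hc, hd⟩
    have hu : u ≠ 0 := by
      rintro rfl
      have hv : v ≠ 0 := fun h => huv ⟨rfl, h⟩
      apply h100
      have h1 : w100 * v = 0 := by linear_combination ha
      exact (mul_eq_zero.mp h1).resolve_right hv
    have hv : v ≠ 0 := by
      rintro rfl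
      apply h000
      have h1 : w000 * u = 0 := by linear_combination ha
      exact (mul_eq_zero.mp h1).resolve_right hu
    apply hH'
    have key : (B ^ 2 - 4 * A * C) * v ^ 2 = 0 := by
      rw [hA, hB, hC]
      linear_combination
        (w000*(w011*u+w111*v) + w011*(w000*u+w100*v) - w010*(w001*u+w101*v)
            - w001*(w010*u+w110*v)) * (w000*hd + w011*ha - w010*hc - w001*hb)
          - 4*(w000*w011 - w010*w001) * ((w011*u+w111*v)*ha - (w010*u+w110*v)*hc)
    exact (mul_eq_zero.mp key).resolve_right (pow_ne_zero 2 hv)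
  -- choose a good square root of the discriminant
  obtain ⟨s, hs2, hsB, hsplit⟩ : ∃ s : ℂ, s ^ 2 = B ^ 2 - 4 * A * C ∧ s ≠ B ∧
      ∀ u v : ℂ, A * u ^ 2 + B * u * v + C * v ^ 2 = 0 →
        2 * A * u + (B - s) * v = 0 ∨ (B - s) * u + 2 * C * v = 0 := by
    by_cases hAC : A * C = 0
    · have hBne : B ≠ 0 := by
        intro h; apply hH'; rw [h]; linear_combination -4 * hAC
      refine ⟨-B, by linear_combination 4 * hAC, ?_, ?_⟩
      · intro h; apply hBne; linear_combination -h / 2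
      · intro u v hP
        rcases mul_eq_zero.mp hAC with h0 | h0
        · have h1 : v * (B * u + C * v) = 0 := by linear_combination hP - u ^ 2 * h0
          rcases mul_eq_zero.mp h1 with h2 | h2
          · exact Or.inl (by linear_combination 2 * u * h0 + 2 * B * h2)
          · exact Or.inr (by linear_combination 2 * h2)
        · have h1 : u * (A * u + B * v) = 0 := by linear_combination hP - v ^ 2 * h0
          rcases mul_eq_zero.mp h1 with h2 | h2
          · exact Or.inr (by linear_combination 2 * B * h2 + 2 * v * h0)
          · exact Or.inl (by linear_combination 2 * h2)
    · have hAne : A ≠ 0 := fun h => hAC (by rw [h]; ring)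
      obtain ⟨s, hs⟩ := IsAlgClosed.exists_pow_nat_eq (k := ℂ)
        (B ^ 2 - 4 * A * C) (n := 2) (by norm_num)
      refine ⟨s, hs, ?_, ?_⟩
      · intro h; apply hAC
        linear_combination (1 / 4) * hs + (-(s + B) / 4) * h
      · intro u v hP
        have h1 : (2 * A * u + (B - s) * v) * (2 * A * u + (B + s) * v) = 0 := by
          linear_combination 4 * A * hP - v ^ 2 * hs
        rcases mul_eq_zero.mp h1 with h2 | h2
        · exact Or.inl h2
        · right
          have h3 : 2 * A * ((B - s) * u + 2 * C * v) = 0 := by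
            linear_combination (B - s) * h2 + v * hs
          exact (mul_eq_zero.mp h3).resolve_left
            (mul_ne_zero two_ne_zero hAne)
  have hs0 : s ≠ 0 := by rintro rfl; apply hH'; linear_combination -hs2
  have hsB' : s - B ≠ 0 := sub_ne_zero.mpr hsB
  -- the two roots
  have hPx : A * (s - B) ^ 2 + B * (s - B) * (2 * A) + C * (2 * A) ^ 2 = 0 := by
    linear_combination A * hs2
  have hPx' : A * (2 * C) ^ 2 + B * (2 * C) * (s - B) + C * (s - B) ^ 2 = 0 := by
    linear_combination C * hs2
  have hdetx : (w000 * (s - B) + w100 * (2 * A)) * (w011 * (s - B) + w111 * (2 * A))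
      - (w010 * (s - B) + w110 * (2 * A)) * (w001 * (s - B) + w101 * (2 * A)) = 0 := by
    linear_combination hPx - (s - B) ^ 2 * hA - (s - B) * (2 * A) * hB - (2 * A) ^ 2 * hC
  have hdetx' : (w000 * (2 * C) + w100 * (s - B)) * (w011 * (2 * C) + w111 * (s - B))
      - (w010 * (2 * C) + w110 * (s - B)) * (w001 * (2 * C) + w101 * (s - B)) = 0 := by
    linear_combination hPx' - (2 * C) ^ 2 * hA - (2 * C) * (s - B) * hB - (s - B) ^ 2 * hC
  obtain ⟨y, hy0, hyr1, hyr2, hyspan⟩ :=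
    ker2 _ _ _ _ hdetx (hrank (s - B) (2 * A) (fun h => hsB' h.1))
  obtain ⟨y', hy'0, hy'r1, hy'r2, hy'span⟩ :=
    ker2 _ _ _ _ hdetx' (hrank (2 * C) (s - B) (fun h => hsB' h.2))
  refine ⟨(s - B, 2 * A), y, (2 * C, s - B), y', ?_, hy0, ?_, hy'0, ?_, ?_, ?_, ?_, ?_, ?_⟩
  · intro h
    rw [Prod.ext_iff] at h
    exact hsB' (by simpa using h.1)
  · intro h
    rw [Prod.ext_iff] at h
    exact hsB' (by simpa using h.2)
  · rw [hq0]; dsimp only; linear_combination hyr1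
  · rw [hq1]; dsimp only; linear_combination hyr2
  · rw [hq0]; dsimp only; linear_combination hy'r1
  · rw [hq1]; dsimp only; linear_combination hy'r2
  · rintro ⟨l, m, hxl, -⟩
    rw [Prod.smul_mk, Prod.ext_iff] at hxl
    simp only [smul_eq_mul] at hxl
    obtain ⟨h1, h2⟩ := hxl
    have hcc : (s - B) ^ 2 - 4 * A * C = 0 := by
      linear_combination (s - B) * h2 - 2 * A * h1
    have h4 : 2 * s * (s - B) = 0 := by linear_combination hcc + hs2
    exact mul_ne_zero (mul_ne_zero two_ne_zero hs0) hsB' h4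
  · intro x'' y'' hx2 hy2 h0 h1
    rw [hq0] at h0
    rw [hq1] at h1
    have r1 : (w000 * x''.1 + w100 * x''.2) * y''.1
        + (w010 * x''.1 + w110 * x''.2) * y''.2 = 0 := by linear_combination h0
    have r2 : (w001 * x''.1 + w101 * x''.2) * y''.1
        + (w011 * x''.1 + w111 * x''.2) * y''.2 = 0 := by linear_combination h1
    have hynz : y''.1 ≠ 0 ∨ y''.2 ≠ 0 := by
      by_contra h
      push_neg at h
      exact hy2 (Prod.ext_iff.mpr ⟨by simpa using h.1, by simpa using h.2⟩)
    have hdet'' : (w000 * x''.1 + w100 * x''.2) * (w011 * x''.1 + w111 * x''.2)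
        - (w010 * x''.1 + w110 * x''.2) * (w001 * x''.1 + w101 * x''.2) = 0 := by
      rcases hynz with hy1 | hy1
      · have e1 : ((w000 * x''.1 + w100 * x''.2) * (w011 * x''.1 + w111 * x''.2)
            - (w010 * x''.1 + w110 * x''.2) * (w001 * x''.1 + w101 * x''.2)) * y''.1 = 0 := by
          linear_combination (w011 * x''.1 + w111 * x''.2) * r1
            - (w010 * x''.1 + w110 * x''.2) * r2
        exact (mul_eq_zero.mp e1).resolve_right hy1
      · have e2 : ((w000 * x''.1 + w100 * x''.2) * (w011 * x''.1 + w111 * x''.2)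
            - (w010 * x''.1 + w110 * x''.2) * (w001 * x''.1 + w101 * x''.2)) * y''.2 = 0 := by
          linear_combination (w000 * x''.1 + w100 * x''.2) * r2
            - (w001 * x''.1 + w101 * x''.2) * r1
        exact (mul_eq_zero.mp e2).resolve_right hy1
    have hP'' : A * x''.1 ^ 2 + B * x''.1 * x''.2 + C * x''.2 ^ 2 = 0 := by
      linear_combination hdet'' + x''.1 ^ 2 * hA + x''.1 * x''.2 * hB + x''.2 ^ 2 * hC
    rcases hsplit x''.1 x''.2 hP'' with hl | hr
    · -- proportional to x = (s - B, 2A)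
      left
      obtain ⟨l, hldef⟩ : ∃ l : ℂ, l = x''.1 / (s - B) := ⟨_, rfl⟩
      have hu1 : x''.1 = l * (s - B) := by rw [hldef]; field_simp
      have hu2 : x''.2 = l * (2 * A) := by
        rw [hldef, div_mul_eq_mul_div, eq_div_iff hsB']
        linear_combination -hl
      have hl0 : l ≠ 0 := by
        rintro rfl
        apply hx2
        rw [Prod.ext_iff]
        constructor
        · simpa using hu1
        · simpa using hu2
      have k1 : ((w000 * (s - B) + w100 * (2 * A)) * y''.1
          + (w010 * (s - B) + w110 * (2 * A)) * y''.2) * l = 0 := by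
        linear_combination r1 - (w000 * y''.1 + w010 * y''.2) * hu1
          - (w100 * y''.1 + w110 * y''.2) * hu2
      have k2 : ((w001 * (s - B) + w101 * (2 * A)) * y''.1
          + (w011 * (s - B) + w111 * (2 * A)) * y''.2) * l = 0 := by
        linear_combination r2 - (w001 * y''.1 + w011 * y''.2) * hu1
          - (w101 * y''.1 + w111 * y''.2) * hu2
      obtain ⟨m, hm⟩ := hyspan y'' ((mul_eq_zero.mp k1).resolve_right hl0)
        ((mul_eq_zero.mp k2).resolve_right hl0)
      have hm0 : m ≠ 0 := by
        rintro rfl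
        rw [zero_smul] at hm
        exact hy2 hm
      refine ⟨l, m, hl0, hm0, ?_, hm⟩
      rw [Prod.smul_mk, Prod.ext_iff]
      simp only [smul_eq_mul]
      exact ⟨hu1, hu2⟩
    · -- proportional to x' = (2C, s - B)
      right
      obtain ⟨l, hldef⟩ : ∃ l : ℂ, l = x''.2 / (s - B) := ⟨_, rfl⟩
      have hu2 : x''.2 = l * (s - B) := by rw [hldef]; field_simp
      have hu1 : x''.1 = l * (2 * C) := by
        rw [hldef, div_mul_eq_mul_div, eq_div_iff hsB']
        linear_combination -hr
      have hl0 : l ≠ 0 := by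
        rintro rfl
        apply hx2
        rw [Prod.ext_iff]
        constructor
        · simpa using hu1
        · simpa using hu2
      have k1 : ((w000 * (2 * C) + w100 * (s - B)) * y''.1
          + (w010 * (2 * C) + w110 * (s - B)) * y''.2) * l = 0 := by
        linear_combination r1 - (w000 * y''.1 + w010 * y''.2) * hu1
          - (w100 * y''.1 + w110 * y''.2) * hu2
      have k2 : ((w001 * (2 * C) + w101 * (s - B)) * y''.1
          + (w011 * (2 * C) + w111 * (s - B)) * y''.2) * l = 0 := by
        linear_combination r2 - (w001 * y''.1 + w011 * y''.2) * hu1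
          - (w101 * y''.1 + w111 * y''.2) * hu2
      obtain ⟨m, hm⟩ := hy'span y'' ((mul_eq_zero.mp k1).resolve_right hl0)
        ((mul_eq_zero.mp k2).resolve_right hl0)
      have hm0 : m ≠ 0 := by
        rintro rfl
        rw [zero_smul] at hm
        exact hy2 hm
      refine ⟨l, m, hl0, hm0, ?_, hm⟩
      rw [Prod.smul_mk, Prod.ext_iff]
      simp only [smul_eq_mul]
      exact ⟨hu1, hu2⟩
end
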